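/- Let ν be a σ-finite reference measure on a measurable space, π_F and π_C strictly positive probability densities with respect to ν, and let Q be a Markov transition kernel that is in detailed balance with the measure with density π_C and that has a transition density q_C(·|·) with respect to ν. Then the delayed-acceptance kernel that proposes ψ ~ Q(θ, ·) and accepts with probability α(ψ|θ) = min{1, (π_F(ψ) π_C(θ)) / (π_F(θ) π_C(ψ))} (setting the next state to θ on rejection) is in detailed balance with the measure having density π_F. (Second-stage accept/reject step of the surrogate transition method.) -/

import Mathlib

open MeasureTheory ProbabilityTheory

private lemma ofReal_max_zero' (q : ℝ) : ENNReal.ofReal (max q 0) = ENNReal.ofReal q := by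
  rcases le_total 0 q with h | h
  · rw [max_eq_left h]
  · rw [max_eq_right h, ENNReal.ofReal_of_nonpos h, ENNReal.ofReal_zero]

/-- The delayed-acceptance kernel built from a proposal kernel `Q` and acceptance
probability `α` (with `α θ ψ` the probability of accepting the proposal `ψ` from the
current state `θ`):
`K(θ, A) = ∫_A α(ψ|θ) Q(θ, dψ) + (1 − ∫ α(ψ|θ) Q(θ, dψ)) δ_θ(A)`. -/
noncomputable def daKernel {E : Type*} [MeasurableSpace E]
    (Q : Kernel E E) (α : E → E → ℝ) (θ : E) : Measure E :=
  (Q θ).withDensity (fun ψ => ENNReal.ofReal (α θ ψ)) +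
    (1 - ∫⁻ ψ, ENNReal.ofReal (α θ ψ) ∂(Q θ)) • Measure.dirac θ

/-- **Second-stage accept/reject step of the surrogate transition method.** Let `ν` be a
σ-finite reference measure, `π_F, π_C` strictly positive probability densities with
respect to `ν`, and `Q` a Markov transition kernel in detailed balance with the measure
with density `π_C` and having a transition density `q_C` with respect to `ν`. Then the
delayed-acceptance kernel that proposes `ψ ~ Q(θ, ·)` and accepts with probability
`α(ψ|θ) = min{1, π_F(ψ) π_C(θ) / (π_F(θ) π_C(ψ))}` (remaining at `θ` on rejection) is in
detailed balance with the measure having density `π_F`. -/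
theorem daKernel_detailedBalance
    {E : Type*} [MeasurableSpace E] (ν : Measure E) [SigmaFinite ν]
    (πF πC : E → ℝ)
    (hπFpos : ∀ x, 0 < πF x) (hπFmeas : Measurable πF)
    (hπFdens : ∫⁻ x, ENNReal.ofReal (πF x) ∂ν = 1)
    (hπCpos : ∀ x, 0 < πC x) (hπCmeas : Measurable πC)
    (hπCdens : ∫⁻ x, ENNReal.ofReal (πC x) ∂ν = 1)
    (Q : Kernel E E) [IsMarkovKernel Q]
    (qC : E → E → ℝ) (hqCmeas : Measurable (Function.uncurry qC))
    (hQdens : ∀ θ, Q θ = ν.withDensity (fun ψ => ENNReal.ofReal (qC θ ψ)))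
    (hQdb : ∀ A B : Set E, MeasurableSet A → MeasurableSet B →
      ∫⁻ θ in A, Q θ B ∂(ν.withDensity fun x => ENNReal.ofReal (πC x)) =
        ∫⁻ θ in B, Q θ A ∂(ν.withDensity fun x => ENNReal.ofReal (πC x))) :
    ∀ A B : Set E, MeasurableSet A → MeasurableSet B →
      ∫⁻ θ in A,
          daKernel Q (fun θ ψ => min 1 (πF ψ * πC θ / (πF θ * πC ψ))) θ B
          ∂(ν.withDensity fun x => ENNReal.ofReal (πF x)) =
        ∫⁻ θ in B,
          daKernel Q (fun θ ψ => min 1 (πF ψ * πC θ / (πF θ * πC ψ))) θ A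
          ∂(ν.withDensity fun x => ENNReal.ofReal (πF x)) := by
  intro A B hA hB
  set α : E → E → ℝ := fun θ ψ => min 1 (πF ψ * πC θ / (πF θ * πC ψ)) with hαdef
  set μF : Measure E := ν.withDensity fun x => ENNReal.ofReal (πF x) with hμFdef
  set μC : Measure E := ν.withDensity fun x => ENNReal.ofReal (πC x) with hμCdef
  set νν : Measure (E × E) := ν.prod ν with hννdef
  -- measurability facts
  have hαmeas : Measurable (Function.uncurry α) :=
    measurable_const.min (((hπFmeas.comp measurable_snd).mul
      (hπCmeas.comp measurable_fst)).div
      ((hπFmeas.comp measurable_fst).mul (hπCmeas.comp measurable_snd)))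
  have hqθ : ∀ θ, Measurable fun ψ => ENNReal.ofReal (qC θ ψ) :=
    fun θ => (hqCmeas.comp measurable_prodMk_left).ennreal_ofReal
  have hαθ : ∀ θ, Measurable fun ψ => ENNReal.ofReal (α θ ψ) :=
    fun θ => (hαmeas.comp measurable_prodMk_left).ennreal_ofReal
  have hgmeas : Measurable fun p : E × E =>
      ENNReal.ofReal (πC p.1) * ENNReal.ofReal (qC p.1 p.2) :=
    ((hπCmeas.comp measurable_fst).ennreal_ofReal).mul hqCmeas.ennreal_ofReal
  -- the acceptance-weighted density and its symmetrized form
  set F : E × E → ENNReal := fun p =>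
    ENNReal.ofReal (πF p.1) * (ENNReal.ofReal (qC p.1 p.2) * ENNReal.ofReal (α p.1 p.2))
    with hFdef
  set S : E × E → ENNReal := fun p =>
    min (ENNReal.ofReal (πF p.1) * ENNReal.ofReal (qC p.1 p.2))
      (ENNReal.ofReal (πF p.2) * ENNReal.ofReal (qC p.2 p.1)) with hSdef
  have hFinner : Measurable fun p : E × E =>
      ENNReal.ofReal (qC p.1 p.2) * ENNReal.ofReal (α p.1 p.2) :=
    hqCmeas.ennreal_ofReal.mul hαmeas.ennreal_ofReal
  have hFmeas : Measurable F :=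
    ((hπFmeas.comp measurable_fst).ennreal_ofReal).mul hFinner
  -- rectangle formulas
  have hrect : ∀ (s t : Set E), MeasurableSet s → MeasurableSet t →
      ∫⁻ p in s ×ˢ t, ENNReal.ofReal (πC p.1) * ENNReal.ofReal (qC p.1 p.2) ∂νν
        = ∫⁻ θ in s, Q θ t ∂μC := by
    intro s t hs ht
    rw [hννdef, ← Measure.prod_restrict, lintegral_prod _ hgmeas.aemeasurable]
    have h1 : ∀ θ, ∫⁻ ψ, ENNReal.ofReal (πC θ) * ENNReal.ofReal (qC θ ψ) ∂(ν.restrict t)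
        = ENNReal.ofReal (πC θ) * Q θ t := by
      intro θ
      rw [lintegral_const_mul _ (hqθ θ), hQdens θ, withDensity_apply _ ht]
    simp_rw [h1]
    rw [hμCdef, restrict_withDensity hs,
      lintegral_withDensity_eq_lintegral_mul _ hπCmeas.ennreal_ofReal (Q.measurable_coe ht)]
    rfl
  have hrectswap : ∀ (s t : Set E), MeasurableSet s → MeasurableSet t →
      ∫⁻ p in s ×ˢ t, ENNReal.ofReal (πC p.2) * ENNReal.ofReal (qC p.2 p.1) ∂νν
        = ∫⁻ ψ in t, Q ψ s ∂μC := by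
    intro s t hs ht
    rw [hννdef, ← Measure.prod_restrict,
      lintegral_prod_symm (fun p : E × E => ENNReal.ofReal (πC p.2) * ENNReal.ofReal (qC p.2 p.1))
        ((hgmeas.comp measurable_swap : Measurable fun p : E × E =>
          ENNReal.ofReal (πC p.2) * ENNReal.ofReal (qC p.2 p.1)).aemeasurable)]
    have h1 : ∀ ψ, ∫⁻ θ, ENNReal.ofReal (πC ψ) * ENNReal.ofReal (qC ψ θ) ∂(ν.restrict s)
        = ENNReal.ofReal (πC ψ) * Q ψ s := by
      intro ψ
      rw [lintegral_const_mul _ (hqθ ψ), hQdens ψ, withDensity_apply _ hs]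
    simp_rw [h1]
    rw [hμCdef, restrict_withDensity ht,
      lintegral_withDensity_eq_lintegral_mul _ hπCmeas.ennreal_ofReal (Q.measurable_coe hs)]
    rfl
  have hμCuniv : μC Set.univ = 1 := by
    rw [hμCdef, withDensity_apply _ MeasurableSet.univ, Measure.restrict_univ]
    exact hπCdens
  -- the two product measures with densities g and g ∘ swap
  set μ₁ : Measure (E × E) := νν.withDensity fun p =>
    ENNReal.ofReal (πC p.1) * ENNReal.ofReal (qC p.1 p.2) with hμ₁def
  set μ₂ : Measure (E × E) := νν.withDensity fun p =>
    ENNReal.ofReal (πC p.2) * ENNReal.ofReal (qC p.2 p.1) with hμ₂def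
  have hμ₁univ : μ₁ Set.univ = 1 := by
    rw [hμ₁def, withDensity_apply _ MeasurableSet.univ, ← Set.univ_prod_univ,
      hrect Set.univ Set.univ MeasurableSet.univ MeasurableSet.univ]
    simp [measure_univ, hμCuniv]
  have hμ₂univ : μ₂ Set.univ = 1 := by
    rw [hμ₂def, withDensity_apply _ MeasurableSet.univ, ← Set.univ_prod_univ,
      hrectswap Set.univ Set.univ MeasurableSet.univ MeasurableSet.univ]
    simp [measure_univ, hμCuniv]
  have hfin₁ : IsFiniteMeasure μ₁ := ⟨by rw [hμ₁univ]; exact ENNReal.one_lt_top⟩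
  have hμeq : μ₁ = μ₂ := by
    refine ext_of_generate_finite _ generateFrom_prod.symm isPiSystem_prod ?_
      (by rw [hμ₁univ, hμ₂univ])
    rintro _ ⟨s, hs, t, ht, rfl⟩
    simp only [Set.mem_setOf_eq] at hs ht
    rw [hμ₁def, hμ₂def, withDensity_apply _ (hs.prod ht), withDensity_apply _ (hs.prod ht),
      hrect s t hs ht, hrectswap s t hs ht, hQdb s t hs ht]
  -- a.e. symmetry of the detailed-balance density of Q
  have gsym : (fun p : E × E => ENNReal.ofReal (πC p.1) * ENNReal.ofReal (qC p.1 p.2))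
      =ᵐ[νν] fun p => ENNReal.ofReal (πC p.2) * ENNReal.ofReal (qC p.2 p.1) := by
    refine ae_eq_of_forall_setLIntegral_eq_of_sigmaFinite hgmeas
      (hgmeas.comp measurable_swap) fun s hs _ => ?_
    rw [← withDensity_apply _ hs, ← withDensity_apply _ hs, ← hμ₁def, ← hμ₂def, hμeq]
  -- pointwise identity: F = S whenever the density is symmetric
  have key : F =ᵐ[νν] S := by
    filter_upwards [gsym] with p hp
    obtain ⟨θ, ψ⟩ := p
    have ha := hπFpos θ; have hb := hπCpos θ; have hc := hπFpos ψ; have hd := hπCpos ψ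
    show ENNReal.ofReal (πF θ) * (ENNReal.ofReal (qC θ ψ) * ENNReal.ofReal (α θ ψ))
      = min (ENNReal.ofReal (πF θ) * ENNReal.ofReal (qC θ ψ))
          (ENNReal.ofReal (πF ψ) * ENNReal.ofReal (qC ψ θ))
    simp only [] at hp
    set q : ℝ := max (qC θ ψ) 0 with hqdef
    set q' : ℝ := max (qC ψ θ) 0 with hq'def
    have hq0 : (0:ℝ) ≤ q := le_max_right _ _
    have hq'0 : (0:ℝ) ≤ q' := le_max_right _ _
    have hq : ENNReal.ofReal (qC θ ψ) = ENNReal.ofReal q := (ofReal_max_zero' _).symm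
    have hq' : ENNReal.ofReal (qC ψ θ) = ENNReal.ofReal q' := (ofReal_max_zero' _).symm
    rw [hq, hq'] at hp ⊢
    have hbq : πC θ * q = πC ψ * q' := by
      rw [← ENNReal.ofReal_mul hb.le, ← ENNReal.ofReal_mul hd.le] at hp
      exact (ENNReal.ofReal_eq_ofReal_iff (by positivity) (by positivity)).mp hp
    have hα0 : 0 ≤ α θ ψ := le_min zero_le_one (by positivity)
    have hreal : πF θ * (q * α θ ψ) = min (πF θ * q) (πF ψ * q') := by
      have h2 : πF θ * (q * (πF ψ * πC θ / (πF θ * πC ψ))) = πF ψ * q' := by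
        have h3 : πF θ * (q * (πF ψ * πC θ / (πF θ * πC ψ)))
            = πF ψ * (πC θ * q) / πC ψ := by
          field_simp
        rw [h3, hbq]
        field_simp
      calc πF θ * (q * α θ ψ)
          = min (πF θ * (q * 1)) (πF θ * (q * (πF ψ * πC θ / (πF θ * πC ψ)))) := by
            have hαv : α θ ψ = min 1 (πF ψ * πC θ / (πF θ * πC ψ)) := rfl
            rw [hαv, mul_min_of_nonneg _ _ hq0, mul_min_of_nonneg _ _ ha.le]
        _ = min (πF θ * q) (πF ψ * q') := by rw [mul_one, h2]
    calc ENNReal.ofReal (πF θ) * (ENNReal.ofReal q * ENNReal.ofReal (α θ ψ))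
        = ENNReal.ofReal (πF θ * (q * α θ ψ)) := by
          rw [ENNReal.ofReal_mul ha.le, ENNReal.ofReal_mul hq0]
      _ = ENNReal.ofReal (min (πF θ * q) (πF ψ * q')) := by rw [hreal]
      _ = min (ENNReal.ofReal (πF θ * q)) (ENNReal.ofReal (πF ψ * q')) :=
          Monotone.map_min fun _ _ h => ENNReal.ofReal_le_ofReal h
      _ = min (ENNReal.ofReal (πF θ) * ENNReal.ofReal q)
            (ENNReal.ofReal (πF ψ) * ENNReal.ofReal q') := by
          rw [ENNReal.ofReal_mul ha.le, ENNReal.ofReal_mul hc.le]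
  -- the "move" part as a product integral
  have hT1 : ∀ (s t : Set E), MeasurableSet s → MeasurableSet t →
      ∫⁻ θ in s, ((Q θ).withDensity fun ψ => ENNReal.ofReal (α θ ψ)) t ∂μF
        = ∫⁻ p in s ×ˢ t, F p ∂νν := by
    intro s t hs ht
    have h1 : ∀ θ, ((Q θ).withDensity fun ψ => ENNReal.ofReal (α θ ψ)) t
        = ∫⁻ ψ, ENNReal.ofReal (qC θ ψ) * ENNReal.ofReal (α θ ψ) ∂(ν.restrict t) := by
      intro θ
      rw [withDensity_apply _ ht, hQdens θ, restrict_withDensity ht,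
        lintegral_withDensity_eq_lintegral_mul _ (hqθ θ) (hαθ θ)]
      rfl
    have hinner : Measurable fun θ =>
        ∫⁻ ψ, ENNReal.ofReal (qC θ ψ) * ENNReal.ofReal (α θ ψ) ∂(ν.restrict t) :=
      Measurable.lintegral_prod_right' (ν := ν.restrict t) hFinner
    simp_rw [h1]
    rw [hμFdef, restrict_withDensity hs,
      lintegral_withDensity_eq_lintegral_mul _ hπFmeas.ennreal_ofReal hinner,
      hννdef, ← Measure.prod_restrict, lintegral_prod _ hFmeas.aemeasurable]
    refine lintegral_congr fun θ => ?_
    exact (lintegral_const_mul _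
      ((hqθ θ).mul (hαθ θ))).symm
  -- symmetry of the move part
  have hSswap : ∀ (s t : Set E),
      ∫⁻ p in s ×ˢ t, S p ∂νν = ∫⁻ p in t ×ˢ s, S p ∂νν := by
    intro s t
    rw [hννdef, ← Measure.prod_restrict, ← Measure.prod_restrict,
      ← lintegral_prod_swap S]
    exact lintegral_congr fun z => (min_comm _ _)
  have hmove : ∫⁻ p in A ×ˢ B, F p ∂νν = ∫⁻ p in B ×ˢ A, F p ∂νν := by
    have e1 : ∫⁻ p in A ×ˢ B, F p ∂νν = ∫⁻ p in A ×ˢ B, S p ∂νν :=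
      lintegral_congr_ae (ae_restrict_of_ae key)
    have e2 : ∫⁻ p in B ×ˢ A, F p ∂νν = ∫⁻ p in B ×ˢ A, S p ∂νν :=
      lintegral_congr_ae (ae_restrict_of_ae key)
    rw [e1, e2, hSswap]
  -- the "stay" part
  have hT2 : ∀ (s t : Set E), MeasurableSet s → MeasurableSet t →
      ∫⁻ θ in s, (1 - ∫⁻ ψ, ENNReal.ofReal (α θ ψ) ∂(Q θ)) * Measure.dirac θ t ∂μF
        = ∫⁻ θ in t ∩ s, (1 - ∫⁻ ψ, ENNReal.ofReal (α θ ψ) ∂(Q θ)) ∂μF := by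
    intro s t hs ht
    have h1 : ∀ θ, (1 - ∫⁻ ψ, ENNReal.ofReal (α θ ψ) ∂(Q θ)) * Measure.dirac θ t
        = t.indicator (fun θ => 1 - ∫⁻ ψ, ENNReal.ofReal (α θ ψ) ∂(Q θ)) θ := by
      intro θ
      rw [Measure.dirac_apply' _ ht]
      by_cases h : θ ∈ t
      · simp [Set.indicator_of_mem h]
      · simp [Set.indicator_of_notMem h, h]
    simp_rw [h1]
    rw [lintegral_indicator ht, Measure.restrict_restrict ht]
  -- splitting the delayed-acceptance kernel under the integral
  have hsplit : ∀ (s t : Set E), MeasurableSet s → MeasurableSet t →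
      ∫⁻ θ in s, daKernel Q α θ t ∂μF
        = ∫⁻ θ in s, ((Q θ).withDensity fun ψ => ENNReal.ofReal (α θ ψ)) t ∂μF
          + ∫⁻ θ in s, (1 - ∫⁻ ψ, ENNReal.ofReal (α θ ψ) ∂(Q θ)) * Measure.dirac θ t ∂μF := by
    intro s t hs ht
    have h1 : ∀ θ, ((Q θ).withDensity fun ψ => ENNReal.ofReal (α θ ψ)) t
        = ∫⁻ ψ, ENNReal.ofReal (qC θ ψ) * ENNReal.ofReal (α θ ψ) ∂(ν.restrict t) := by
      intro θ
      rw [withDensity_apply _ ht, hQdens θ, restrict_withDensity ht,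
        lintegral_withDensity_eq_lintegral_mul _ (hqθ θ) (hαθ θ)]
      rfl
    have hinner : Measurable fun θ =>
        ∫⁻ ψ, ENNReal.ofReal (qC θ ψ) * ENNReal.ofReal (α θ ψ) ∂(ν.restrict t) :=
      Measurable.lintegral_prod_right' (ν := ν.restrict t) hFinner
    have h2 : ∀ θ, daKernel Q α θ t
        = ((Q θ).withDensity fun ψ => ENNReal.ofReal (α θ ψ)) t
          + (1 - ∫⁻ ψ, ENNReal.ofReal (α θ ψ) ∂(Q θ)) * Measure.dirac θ t := by
      intro θ
      simp [daKernel, Measure.add_apply, Measure.smul_apply, smul_eq_mul]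
    simp_rw [h2]
    simp_rw [h1]
    exact lintegral_add_left hinner _
  -- assemble
  rw [hsplit A B hA hB, hsplit B A hB hA, hT1 A B hA hB, hT1 B A hB hA,
    hT2 A B hA hB, hT2 B A hB hA, hmove, Set.inter_comm B A]
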